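/- arXiv:0911.0170 — 4 statements merged into one kernel-verified Lean document; each statement's English description precedes it below -/
import Mathlib

section
/- For stochastic vectors p, r in R^N with (p,r) > 0 and α = 1, if p = r then the conflict composition fixes the pair: p¹ = p and r¹ = r if and only if all nonzero coordinates of p are equal. -/
/-!
Once `r = p`, both fixed-point equations read `p i * (1 - p i) = p i * (1 - S)` with `S = ∑ j, p j ^ 2`,
so the pair is fixed exactly when every coordinate is `0` or `S`. Conversely, if all nonzero
coordinates share a value `c`, then `p j * p j = c * p j` termwise and `S = c * ∑ j, p j = c`.
-/

open Finset

theorem mul_one_sub_div_one_sub_eq_self_iff {x s : ℝ} (hs : s ≠ 1) :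
    x * (1 - x) / (1 - s) = x ↔ x = 0 ∨ x = s := by
  rw [div_eq_iff (sub_ne_zero.mpr hs.symm)]
  constructor
  · intro h
    by_cases hx : x = 0
    · exact .inl hx
    · exact .inr (by linarith [mul_left_cancel₀ hx h])
  · rintro (rfl | rfl) <;> ring

theorem sum_mul_self_eq_of_forall_ne_zero_eq {ι R : Type*} [Fintype ι] [CommSemiring R]
    {p : ι → R} (hp : ∑ j, p j = 1) {c : R} (hc : ∀ j, p j ≠ 0 → p j = c) :
    ∑ j, p j * p j = c := by
  calc ∑ j, p j * p j = ∑ j, c * p j := by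
        refine sum_congr rfl fun j _ => ?_
        by_cases hj : p j = 0
        · simp [hj]
        · rw [hc j hj]
    _ = c := by rw [← mul_sum, hp, mul_one]

theorem conflict_fixed_iff_uniform_general {N : ℕ} (p r : Fin N → ℝ)
    (hp1 : ∑ i, p i = 1)
    (hip' : ∑ i, p i * r i < 1)
    (hpr : p = r) :
    ((∀ i, p i * (1 - r i) / (1 - ∑ j, p j * r j) = p i) ∧
     (∀ i, r i * (1 - p i) / (1 - ∑ j, p j * r j) = r i)) ↔
    (∀ i j, p i ≠ 0 → p j ≠ 0 → p i = p j) := by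
  subst hpr
  simp only [and_self, mul_one_sub_div_one_sub_eq_self_iff hip'.ne]
  constructor
  · intro h i j hi hj
    rw [(h i).resolve_left hi, (h j).resolve_left hj]
  · intro h i
    by_cases hi : p i = 0
    · exact .inl hi
    · exact .inr (sum_mul_self_eq_of_forall_ne_zero_eq hp1 fun j hj => h j i hj hi).symm

/-- for `α = 1` and equal stochastic vectors `p = r`, the conflict
composition fixes the pair iff all nonzero coordinates of `p` are equal. -/
theorem conflict_fixed_iff_uniform {N : ℕ} (p r : Fin N → ℝ)
    (hp0 : ∀ i, 0 ≤ p i) (hr0 : ∀ i, 0 ≤ r i)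
    (hp1 : ∑ i, p i = 1) (hr1 : ∑ i, r i = 1)
    (hip : 0 < ∑ i, p i * r i) (hip' : ∑ i, p i * r i < 1)
    (hpr : p = r) :
    ((∀ i, p i * (1 - r i) / (1 - ∑ j, p j * r j) = p i) ∧
     (∀ i, r i * (1 - p i) / (1 - ∑ j, p j * r j) = r i)) ↔
    (∀ i j, p i ≠ 0 → p j ≠ 0 → p i = p j) :=
  conflict_fixed_iff_uniform_general p r hp1 hip' hpr
end

section
/- Let p, r be stochastic vectors with (p,r) > 0 and consider the α = -1 conflict composition. Suppose indices i ≠ k satisfy σ_k > σ_i, ρ_k < ρ_i, and 2ρ_k + σ_k ≤ 2ρ_i + σ_i. Then after one step, σ¹_k ≤ σ¹_i and ρ¹_k < ρ¹_i. -/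
/-!
With `z = 1 + (p, r)`, one step maps `σ ↦ (σ + 2ρ) / z` and `ρ ↦ ρ (1 + σ + ρ) / z²`.
The first claim is therefore the critical hypothesis divided by `z`. For the second, the critical
hypothesis bounds `σ_k` by `σ_i + 2 (ρ_i - ρ_k)`, and then
`ρ_i (1 + σ_i + ρ_i) - ρ_k (1 + σ_i + 2ρ_i - ρ_k) = (ρ_i - ρ_k) (1 + σ_i + ρ_i - ρ_k) > 0`.
-/

theorem conflict_step_add (a b z : ℝ) :
    a * (1 + b) / z + b * (1 + a) / z = (a + b + 2 * (a * b)) / z := by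
  ring

theorem conflict_step_mul (a b z : ℝ) :
    a * (1 + b) / z * (b * (1 + a) / z) = a * b * (1 + (a + b) + a * b) / z ^ 2 := by
  ring

theorem mul_one_add_add_lt_of_add_two_mul_le {σ ρ σ' ρ' : ℝ} (hρ : 0 ≤ ρ) (hρρ' : ρ < ρ')
    (hσ' : 0 ≤ σ') (hcrit : σ + 2 * ρ ≤ σ' + 2 * ρ') :
    ρ * (1 + σ + ρ) < ρ' * (1 + σ' + ρ') :=
  calc ρ * (1 + σ + ρ) ≤ ρ * (1 + σ' + 2 * ρ' - ρ) :=
        mul_le_mul_of_nonneg_left (by linarith) hρ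
    _ < ρ' * (1 + σ' + ρ') := by
        have hgap : 0 < (ρ' - ρ) * (1 + σ' + (ρ' - ρ)) := mul_pos (by linarith) (by linarith)
        linear_combination hgap

theorem attractive_critical_one_step_general {N : ℕ} (p r : Fin N → ℝ) (i k : Fin N)
    (hp0 : ∀ j, 0 ≤ p j) (hr0 : ∀ j, 0 ≤ r j)
    (hρ : p k * r k < p i * r i)
    (hcrit : 2 * (p k * r k) + (p k + r k) ≤ 2 * (p i * r i) + (p i + r i)) :
    (p k * (1 + r k) / (1 + ∑ j, p j * r j) + r k * (1 + p k) / (1 + ∑ j, p j * r j) ≤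
     p i * (1 + r i) / (1 + ∑ j, p j * r j) + r i * (1 + p i) / (1 + ∑ j, p j * r j)) ∧
    (p k * (1 + r k) / (1 + ∑ j, p j * r j) * (r k * (1 + p k) / (1 + ∑ j, p j * r j)) <
     p i * (1 + r i) / (1 + ∑ j, p j * r j) * (r i * (1 + p i) / (1 + ∑ j, p j * r j))) := by
  have hz : 0 < 1 + ∑ j, p j * r j :=
    add_pos_of_pos_of_nonneg one_pos (Finset.sum_nonneg fun j _ => mul_nonneg (hp0 j) (hr0 j))
  rw [conflict_step_add, conflict_step_add, conflict_step_mul, conflict_step_mul]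
  constructor
  · exact div_le_div_of_nonneg_right (by linarith) hz.le
  · refine div_lt_div_of_pos_right ?_ (by positivity)
    exact mul_one_add_add_lt_of_add_two_mul_le (mul_nonneg (hp0 k) (hr0 k)) hρ
      (add_nonneg (hp0 i) (hr0 i)) (by linarith)

/-- Proposition 2, one step: under the critical hypotheses the
dominance reverses after one attractive step. -/
theorem attractive_critical_one_step {N : ℕ} (p r : Fin N → ℝ) (i k : Fin N)
    (hik : i ≠ k)
    (hp0 : ∀ j, 0 ≤ p j) (hr0 : ∀ j, 0 ≤ r j)
    (hp1 : ∑ j, p j = 1) (hr1 : ∑ j, r j = 1)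
    (hip : 0 < ∑ j, p j * r j)
    (hσ : p k + r k > p i + r i)
    (hρ : p k * r k < p i * r i)
    (hcrit : 2 * (p k * r k) + (p k + r k) ≤ 2 * (p i * r i) + (p i + r i)) :
    (p k * (1 + r k) / (1 + ∑ j, p j * r j) + r k * (1 + p k) / (1 + ∑ j, p j * r j) ≤
     p i * (1 + r i) / (1 + ∑ j, p j * r j) + r i * (1 + p i) / (1 + ∑ j, p j * r j)) ∧
    (p k * (1 + r k) / (1 + ∑ j, p j * r j) * (r k * (1 + p k) / (1 + ∑ j, p j * r j)) <
     p i * (1 + r i) / (1 + ∑ j, p j * r j) * (r i * (1 + p i) / (1 + ∑ j, p j * r j))) :=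
  attractive_critical_one_step_general p r i k hp0 hr0 hρ hcrit
end

section
/- For the α = -1 conflict composition, if for indices i, k we have p_i > p_k > 0, r_i > r_k > 0, then the ratio sequences p_i^{(n)}/p_k^{(n)} and r_i^{(n)}/r_k^{(n)} are strictly increasing in n, where (pⁿ, rⁿ) denotes the n-th iterate. -/
/-- One step of the attractive (`α = -1`) conflict composition. -/
noncomputable def attractiveStep {N : ℕ} (s : (Fin N → ℝ) × (Fin N → ℝ)) :
    (Fin N → ℝ) × (Fin N → ℝ) :=
  (fun i => s.1 i * (1 + s.2 i) / (1 + ∑ j, s.1 j * s.2 j),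
   fun i => s.2 i * (1 + s.1 i) / (1 + ∑ j, s.1 j * s.2 j))

/-!
The step multiplies `p_i` by `(1 + r_i) / z` and `r_i` by `(1 + p_i) / z`, so the normaliser `z`
cancels from the ratios and `p_i/p_k` gets multiplied by `(1 + r_i)/(1 + r_k)`, which exceeds `1`
as long as `r_i > r_k`. The ordering `p_k < p_i`, `r_k < r_i` (with positivity) is itself preserved
by the step, so the ratios increase at every step. The step commutes with swapping `p` and `r`,
which gives the statement about `r` from the one about `p`.
-/

open Function

theorem one_add_sum_mul_pos {ι : Type*} [Fintype ι] {p r : ι → ℝ} (hp : ∀ j, 0 ≤ p j)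
    (hr : ∀ j, 0 ≤ r j) : 0 < 1 + ∑ j, p j * r j :=
  add_pos_of_pos_of_nonneg one_pos (Finset.sum_nonneg fun j _ => mul_nonneg (hp j) (hr j))

namespace attractiveStep

variable {N : ℕ} {i k : Fin N} {s : (Fin N → ℝ) × (Fin N → ℝ)}

theorem swap (s : (Fin N → ℝ) × (Fin N → ℝ)) :
    attractiveStep s.swap = (attractiveStep s).swap := by
  simp only [attractiveStep, Prod.fst_swap, Prod.snd_swap, Prod.swap_prod_mk, mul_comm]

theorem iterate_swap (n : ℕ) (s : (Fin N → ℝ) × (Fin N → ℝ)) :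
    attractiveStep^[n] s.swap = (attractiveStep^[n] s).swap :=
  (Function.Commute.iterate_right (f := Prod.swap) (fun s => (swap s).symm) n s).symm

theorem fst_div_fst (hz : 1 + ∑ j, s.1 j * s.2 j ≠ 0) :
    (attractiveStep s).1 i / (attractiveStep s).1 k =
      s.1 i / s.1 k * ((1 + s.2 i) / (1 + s.2 k)) := by
  rw [attractiveStep, div_div_div_cancel_right₀ hz, mul_div_mul_comm]

end attractiveStep

structure IsAhead {N : ℕ} (i k : Fin N) (s : (Fin N → ℝ) × (Fin N → ℝ)) : Prop where
  fst_nonneg : ∀ j, 0 ≤ s.1 j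
  snd_nonneg : ∀ j, 0 ≤ s.2 j
  fst_pos : 0 < s.1 k
  fst_lt : s.1 k < s.1 i
  snd_pos : 0 < s.2 k
  snd_lt : s.2 k < s.2 i

namespace IsAhead

variable {N : ℕ} {i k : Fin N} {s : (Fin N → ℝ) × (Fin N → ℝ)}

theorem swap (h : IsAhead i k s) : IsAhead i k s.swap :=
  ⟨h.snd_nonneg, h.fst_nonneg, h.snd_pos, h.snd_lt, h.fst_pos, h.fst_lt⟩

theorem attractiveStep_fst (h : IsAhead i k s) :
    (∀ j, 0 ≤ (attractiveStep s).1 j) ∧ 0 < (attractiveStep s).1 k ∧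
      (attractiveStep s).1 k < (attractiveStep s).1 i := by
  have hz := one_add_sum_mul_pos h.fst_nonneg h.snd_nonneg
  have hrk : 0 < 1 + s.2 k := by linarith [h.snd_pos]
  refine ⟨fun j => ?_, div_pos (mul_pos h.fst_pos hrk) hz, div_lt_div_of_pos_right ?_ hz⟩
  · exact div_nonneg (mul_nonneg (h.fst_nonneg j) (by linarith [h.snd_nonneg j])) hz.le
  · exact mul_lt_mul h.fst_lt (by linarith [h.snd_lt]) hrk (h.fst_pos.trans h.fst_lt).le

theorem map_attractiveStep (h : IsAhead i k s) : IsAhead i k (attractiveStep s) := by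
  obtain ⟨hp, hpk, hpik⟩ := h.attractiveStep_fst
  obtain ⟨hr, hrk, hrik⟩ := h.swap.attractiveStep_fst
  rw [attractiveStep.swap] at hr hrk hrik
  exact ⟨hp, hr, hpk, hpik, hrk, hrik⟩

theorem iterate (h : IsAhead i k s) (n : ℕ) : IsAhead i k (attractiveStep^[n] s) :=
  Iterate.rec (IsAhead i k) h (fun _ => map_attractiveStep) n

theorem fst_div_lt_attractiveStep (h : IsAhead i k s) :
    s.1 i / s.1 k < (attractiveStep s).1 i / (attractiveStep s).1 k := by
  rw [attractiveStep.fst_div_fst (one_add_sum_mul_pos h.fst_nonneg h.snd_nonneg).ne']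
  refine lt_mul_of_one_lt_right (div_pos (h.fst_pos.trans h.fst_lt) h.fst_pos) ?_
  exact (one_lt_div (by linarith [h.snd_pos])).mpr (by linarith [h.snd_lt])

theorem strictMono_fst_div (h : IsAhead i k s) :
    StrictMono fun n => (attractiveStep^[n] s).1 i / (attractiveStep^[n] s).1 k :=
  strictMono_nat_of_lt_succ fun n => by
    rw [iterate_succ_apply']
    exact (h.iterate n).fst_div_lt_attractiveStep

end IsAhead

theorem attractive_ratio_strictMono_general {N : ℕ} (p r : Fin N → ℝ) (i k : Fin N)
    (hp0 : ∀ j, 0 ≤ p j) (hr0 : ∀ j, 0 ≤ r j)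
    (hpik : p i > p k) (hpk : p k > 0)
    (hrik : r i > r k) (hrk : r k > 0) :
    StrictMono (fun n => (attractiveStep^[n] (p, r)).1 i / (attractiveStep^[n] (p, r)).1 k) ∧
    StrictMono (fun n => (attractiveStep^[n] (p, r)).2 i / (attractiveStep^[n] (p, r)).2 k) := by
  have h : IsAhead i k (p, r) := ⟨hp0, hr0, hpk, hpik, hrk, hrik⟩
  refine ⟨h.strictMono_fst_div, ?_⟩
  simpa only [attractiveStep.iterate_swap, Prod.fst_swap] using
    h.swap.strictMono_fst_div

/-- under the attractive conflict dynamics the ratio sequences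
`p_i^{(n)}/p_k^{(n)}` and `r_i^{(n)}/r_k^{(n)}` are strictly increasing. -/
theorem attractive_ratio_strictMono {N : ℕ} (p r : Fin N → ℝ) (i k : Fin N)
    (hp0 : ∀ j, 0 ≤ p j) (hr0 : ∀ j, 0 ≤ r j)
    (hp1 : ∑ j, p j = 1) (hr1 : ∑ j, r j = 1)
    (hpik : p i > p k) (hpk : p k > 0)
    (hrik : r i > r k) (hrk : r k > 0) :
    StrictMono (fun n => (attractiveStep^[n] (p, r)).1 i / (attractiveStep^[n] (p, r)).1 k) ∧
    StrictMono (fun n => (attractiveStep^[n] (p, r)).2 i / (attractiveStep^[n] (p, r)).2 k) :=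
  attractive_ratio_strictMono_general p r i k hp0 hr0 hpik hpk hrik hrk
end

section
/- For the α = 1 conflict composition iterated n times on stochastic vectors p ≠ r (with all normalizers z_m = 1 - (p^{(m)}, r^{(m)}) positive), the normalized differences are invariant: d^{(n)}_i / D^{(n)} = d_i / D for all n, where d^{(n)}_i = p^{(n)}_i - r^{(n)}_i and D^{(n)} = Σ_{i: d^{(n)}_i > 0} d^{(n)}_i. -/
/-- One step of the repulsive (`α = 1`) conflict composition. -/
noncomputable def repulsiveStep {N : ℕ} (s : (Fin N → ℝ) × (Fin N → ℝ)) :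
    (Fin N → ℝ) × (Fin N → ℝ) :=
  (fun i => s.1 i * (1 - s.2 i) / (1 - ∑ j, s.1 j * s.2 j),
   fun i => s.2 i * (1 - s.1 i) / (1 - ∑ j, s.1 j * s.2 j))

/-!
The cross terms `p_i r_i` cancel in `p_i (1 - r_i) - r_i (1 - p_i)`, so one step of the
composition divides every difference `d_i = p_i - r_i` by the same normalizer `z`. When all
normalizers along the orbit are positive, `d⁽ⁿ⁾ = c • d` for some `c > 0`; this leaves the set
`{i | d_i > 0}` unchanged and multiplies its total `D` by `c` as well, so `d_i / D` is invariant.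
-/

open Finset

/-- The positive part `D = ∑_{d_i > 0} d_i` of a difference vector. -/
noncomputable def positiveMass {ι : Type*} [Fintype ι] (d : ι → ℝ) : ℝ :=
  ∑ j ∈ univ.filter (fun j => 0 < d j), d j

theorem positiveMass_smul {ι : Type*} [Fintype ι] (d : ι → ℝ) {c : ℝ} (hc : 0 < c) :
    positiveMass (c • d) = c * positiveMass d := by
  simp only [positiveMass, Pi.smul_apply, smul_eq_mul, mul_pos_iff_of_pos_left hc, mul_sum]

theorem div_positiveMass_smul {ι : Type*} [Fintype ι] (d : ι → ℝ) {c : ℝ} (hc : 0 < c) (i : ι) :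
    (c • d) i / positiveMass (c • d) = d i / positiveMass d := by
  rw [positiveMass_smul d hc, Pi.smul_apply, smul_eq_mul, mul_div_mul_left _ _ hc.ne']

def pairDiff {N : ℕ} (s : (Fin N → ℝ) × (Fin N → ℝ)) : Fin N → ℝ := s.1 - s.2

theorem pairDiff_repulsiveStep {N : ℕ} (s : (Fin N → ℝ) × (Fin N → ℝ)) :
    pairDiff (repulsiveStep s) = (1 - ∑ j, s.1 j * s.2 j)⁻¹ • pairDiff s := by
  ext i
  simp only [pairDiff, repulsiveStep, Pi.sub_apply, Pi.smul_apply, smul_eq_mul]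
  ring

theorem exists_pos_smul_pairDiff_iterate {N : ℕ} (s : (Fin N → ℝ) × (Fin N → ℝ)) (n : ℕ)
    (hz : ∀ m < n, 0 < 1 - ∑ j, (repulsiveStep^[m] s).1 j * (repulsiveStep^[m] s).2 j) :
    ∃ c : ℝ, 0 < c ∧ pairDiff (repulsiveStep^[n] s) = c • pairDiff s := by
  induction n with
  | zero => exact ⟨1, one_pos, by simp⟩
  | succ n ih =>
    obtain ⟨c, hc, hdiff⟩ := ih fun m hm => hz m (Nat.lt_succ_of_lt hm)
    refine ⟨_ * c, mul_pos (inv_pos.2 (hz n n.lt_succ_self)) hc, ?_⟩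
    rw [Function.iterate_succ_apply', pairDiff_repulsiveStep, hdiff, smul_smul]

theorem repulsive_normalized_difference_invariant_general {N : ℕ} (p r : Fin N → ℝ)
    (n : ℕ)
    (hz : ∀ m < n, 0 < 1 - ∑ j, (repulsiveStep^[m] (p, r)).1 j * (repulsiveStep^[m] (p, r)).2 j)
    (i : Fin N) :
    ((repulsiveStep^[n] (p, r)).1 i - (repulsiveStep^[n] (p, r)).2 i) /
        (∑ j ∈ Finset.univ.filter
            (fun j => 0 < (repulsiveStep^[n] (p, r)).1 j - (repulsiveStep^[n] (p, r)).2 j),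
          ((repulsiveStep^[n] (p, r)).1 j - (repulsiveStep^[n] (p, r)).2 j)) =
      (p i - r i) / (∑ j ∈ Finset.univ.filter (fun j => 0 < p j - r j), (p j - r j)) := by
  obtain ⟨c, hc, hdiff⟩ := exists_pos_smul_pairDiff_iterate (p, r) n hz
  have h := div_positiveMass_smul (pairDiff (p, r)) hc i
  rwa [← hdiff] at h

/-- the normalized differences `d_i^{(n)}/D^{(n)}` are invariant
along the `α = 1` conflict dynamics. -/
theorem repulsive_normalized_difference_invariant {N : ℕ} (p r : Fin N → ℝ)
    (hp0 : ∀ i, 0 ≤ p i) (hr0 : ∀ i, 0 ≤ r i)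
    (hp1 : ∑ i, p i = 1) (hr1 : ∑ i, r i = 1)
    (hne : p ≠ r)
    (n : ℕ)
    (hz : ∀ m < n, 0 < 1 - ∑ j, (repulsiveStep^[m] (p, r)).1 j * (repulsiveStep^[m] (p, r)).2 j)
    (i : Fin N) :
    ((repulsiveStep^[n] (p, r)).1 i - (repulsiveStep^[n] (p, r)).2 i) /
        (∑ j ∈ Finset.univ.filter
            (fun j => 0 < (repulsiveStep^[n] (p, r)).1 j - (repulsiveStep^[n] (p, r)).2 j),
          ((repulsiveStep^[n] (p, r)).1 j - (repulsiveStep^[n] (p, r)).2 j)) =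
      (p i - r i) / (∑ j ∈ Finset.univ.filter (fun j => 0 < p j - r j), (p j - r j)) :=
  repulsive_normalized_difference_invariant_general p r n hz i
end
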